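/- Let G be a finite bipartite weighted graph with parts A, B, initial vertex s ∈ A and marked vertex t ∈ B, total weight W = Σ_{e∈E} w_e, and let p be a unit flow from s to t with energy R = Σ_{e∈E} p_e²/w_e, where W, R > 0. Let α = √(R/W), and let αG be the graph G with every edge weight w_e replaced by α·w_e (the dangling edges of the extension keep weight 1). Then there exists a vector v in the span of {|e⟩ : e ∈ E} with ‖v‖² ≤ √(W·R) such that U_α(|ss'⟩ + v) = |t't⟩ + v, where U_α = R_B R_A is one step of the quantum walk on the extended graph (αG)'. -/

import Mathlib

/-!
**Statement 7.**
Let `G` be a finite bipartite weighted graph with parts `A, B`, initial vertex `s ∈ A`,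
marked vertex `t ∈ B`, total weight `W = ∑ w e > 0`, and `p` a unit flow from `s` to `t`
with energy `R = ∑ (p e)² / w e > 0`.  Let `α = √(R / W)` and let `αG` be `G` with each edge
weight `w e` replaced by `α * w e` (the dangling edges keep weight 1).  Then there is a
vector `v` in the span of `{|e⟩ : e ∈ E}` with `‖v‖² ≤ √(W · R)` such that
`U_α (|ss'⟩ + v) = |t't⟩ + v`, where `U_α = R_B R_A` is one step of the quantum walk on the
extended graph `(αG)'`.

The walk space is `EuclideanSpace ℂ (E ⊕ Bool)` (`Sum.inr false = ss'`, `Sum.inr true = t't`).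
The star states of `(αG)'` use the rescaled weights `fun e => α * w e`; `R_A` is the unitary
acting as `−1` on the span of `{ψ_u : u ∈ A}` and as the identity on its orthogonal
complement, specified by its defining properties (similarly `R_B`).
-/

noncomputable section

namespace Stmt7

variable {V E : Type*} [Fintype V] [Fintype E] [DecidableEq V] [DecidableEq E]

def ket (x : E ⊕ Bool) : EuclideanSpace ℂ (E ⊕ Bool) := EuclideanSpace.single x 1

def psiA (endA : E → V) (w : E → ℝ) (s : V) (u : V) : EuclideanSpace ℂ (E ⊕ Bool) :=
  (∑ e ∈ Finset.univ.filter (fun e => endA e = u),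
      ((Real.sqrt (w e) : ℂ) • ket (Sum.inl e))) +
    (if u = s then ket (Sum.inr false) else 0)

def psiB (endB : E → V) (w : E → ℝ) (t : V) (u : V) : EuclideanSpace ℂ (E ⊕ Bool) :=
  (∑ e ∈ Finset.univ.filter (fun e => endB e = u),
      ((Real.sqrt (w e) : ℂ) • ket (Sum.inl e))) +
    (if u = t then ket (Sum.inr true) else 0)

end Stmt7

/-!
The edge vector `v` is half the difference of the uniform state `Ψ = ∑ √(α w e) |e⟩` and the
flow state `φ = ∑ p e / √(α w e) |e⟩`.  The flow conditions say exactly that `|ss'⟩ - φ` is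
orthogonal to every star state of `A` and `|t't⟩ - φ` to every star state of `B`, while `Ψ`
completed by the dangling edge `|ss'⟩` (resp. `|t't⟩`) is the sum of the star states of `A`
(resp. `B`).  Writing `|ss'⟩ + v = ½ ∑_A ψ_u + ½ (|ss'⟩ - φ)`, the reflection `R_A` only flips
the first summand, which produces `-½ ∑_B ψ_u + ½ (|t't⟩ - φ)`, and `R_B` flips that back to
`|t't⟩ + v`.  Finally `‖v‖² ≤ (‖Ψ‖² + ‖φ‖²) / 2 = (α W + R / α) / 2`, and the choice of `α`
balances the two terms at `√(W R)`.
-/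

section

variable {𝕜 H ι : Type*} [RCLike 𝕜] [NormedAddCommGroup H] [InnerProductSpace 𝕜 H]

lemma reflection_apply_smul_sum_add {S : Finset ι} {ψ : ι → H} {R : H →ₗ[𝕜] H}
    (hneg : ∀ u ∈ S, R (ψ u) = -ψ u) (hid : ∀ x, (∀ u ∈ S, inner 𝕜 (ψ u) x = 0) → R x = x)
    (c : 𝕜) {z : H} (hz : ∀ u ∈ S, inner 𝕜 (ψ u) z = 0) :
    R (c • ∑ u ∈ S, ψ u + z) = -(c • ∑ u ∈ S, ψ u) + z := by
  rw [map_add, map_smul, map_sum, Finset.sum_congr rfl hneg, Finset.sum_neg_distrib, smul_neg,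
    hid z hz]

lemma norm_half_smul_sub_sq_le (x y : H) :
    ‖(2⁻¹ : 𝕜) • (x - y)‖ ^ 2 ≤ (‖x‖ ^ 2 + ‖y‖ ^ 2) / 2 := by
  have := parallelogram_law_with_norm 𝕜 x y
  rw [norm_smul, mul_pow, norm_inv, RCLike.norm_ofNat]
  nlinarith [sq_nonneg ‖x + y‖]

end

lemma Real.sqrt_div_mul_self {W : ℝ} (R : ℝ) (hW : 0 < W) :
    √(R / W) * W = √(W * R) := by
  have := Real.sqrt_pos.2 hW
  rw [Real.sqrt_div' _ hW.le, Real.sqrt_mul hW.le]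
  field_simp
  rw [Real.sq_sqrt hW.le]

lemma Real.div_sqrt_div {W R : ℝ} (hW : 0 < W) (hR : 0 < R) :
    R / √(R / W) = √(W * R) := by
  have := Real.sqrt_pos.2 hR
  have := Real.sqrt_pos.2 hW
  rw [Real.sqrt_div' _ hW.le, Real.sqrt_mul hW.le]
  field_simp
  rw [Real.sq_sqrt hR.le]

namespace Stmt7

open Finset

section

variable {V E : Type*} [Fintype E] [DecidableEq V] [DecidableEq E]

def edgeVector (f : E → ℝ) : EuclideanSpace ℂ (E ⊕ Bool) := ∑ e, (f e : ℂ) • ket (Sum.inl e)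

omit [Fintype E] in
lemma ket_apply (x y : E ⊕ Bool) : ket x y = if y = x then 1 else 0 := by
  simp [ket, PiLp.single_apply]

@[simp] lemma edgeVector_apply_inl (f : E → ℝ) (e : E) : edgeVector f (Sum.inl e) = f e := by
  simp [edgeVector, ket_apply]

@[simp] lemma edgeVector_apply_inr (f : E → ℝ) (b : Bool) : edgeVector f (Sum.inr b) = 0 := by
  simp [edgeVector, ket_apply]

lemma edgeVector_mem_span (f : E → ℝ) :
    edgeVector f ∈ Submodule.span ℂ (Set.range fun e : E => ket (Sum.inl e)) :=
  Submodule.sum_mem _ fun e _ => Submodule.smul_mem _ _ (Submodule.subset_span ⟨e, rfl⟩)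

lemma norm_edgeVector_sq (f : E → ℝ) : ‖edgeVector f‖ ^ 2 = ∑ e, f e ^ 2 := by
  simp [EuclideanSpace.norm_sq_eq, Fintype.sum_sum_type]

lemma inner_psiA (endA : E → V) (w : E → ℝ) (s u : V) (x : EuclideanSpace ℂ (E ⊕ Bool)) :
    inner ℂ (psiA endA w s u) x
      = ∑ e ∈ univ.filter (fun e => endA e = u), (√(w e) : ℂ) * x (Sum.inl e)
        + if u = s then x (Sum.inr false) else 0 := by
  simp only [psiA, inner_add_left, sum_inner, inner_smul_left]
  split_ifs <;> simp [ket, EuclideanSpace.inner_single_left]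

lemma inner_psiB (endB : E → V) (w : E → ℝ) (t u : V) (x : EuclideanSpace ℂ (E ⊕ Bool)) :
    inner ℂ (psiB endB w t u) x
      = ∑ e ∈ univ.filter (fun e => endB e = u), (√(w e) : ℂ) * x (Sum.inl e)
        + if u = t then x (Sum.inr true) else 0 := by
  simp only [psiB, inner_add_left, sum_inner, inner_smul_left]
  split_ifs <;> simp [ket, EuclideanSpace.inner_single_left]

lemma sum_psiA {A : Finset V} {endA : E → V} (hA : ∀ e, endA e ∈ A) (w : E → ℝ) {s : V}
    (hs : s ∈ A) :
    ∑ u ∈ A, psiA endA w s u = edgeVector (fun e => √(w e)) + ket (Sum.inr false) := by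
  simp only [psiA]
  rw [sum_add_distrib, sum_fiberwise_of_maps_to (fun e _ => hA e), sum_ite_eq' A s, if_pos hs]
  rfl

lemma sum_psiB {B : Finset V} {endB : E → V} (hB : ∀ e, endB e ∈ B) (w : E → ℝ) {t : V}
    (ht : t ∈ B) :
    ∑ u ∈ B, psiB endB w t u = edgeVector (fun e => √(w e)) + ket (Sum.inr true) := by
  simp only [psiB]
  rw [sum_add_distrib, sum_fiberwise_of_maps_to (fun e _ => hB e), sum_ite_eq' B t, if_pos ht]
  rfl

lemma inner_psiA_ket_sub_flow {endA : E → V} {w p : E → ℝ} (hw : ∀ e, 0 < w e) {s u : V}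
    (hp : ∑ e ∈ univ.filter (fun e => endA e = u), p e = if u = s then 1 else 0) :
    inner ℂ (psiA endA w s u) (ket (Sum.inr false) - edgeVector (fun e => p e / √(w e))) = 0 := by
  have hcancel (e : E) : (√(w e) : ℂ) * (p e / √(w e)) = p e :=
    mul_div_cancel₀ _ (Complex.ofReal_ne_zero.2 (Real.sqrt_pos.2 (hw e)).ne')
  simp only [inner_sub_right, inner_psiA, ket_apply, edgeVector_apply_inl, edgeVector_apply_inr,
    Complex.ofReal_div, hcancel, reduceCtorEq, if_false, if_true, mul_zero, sum_const_zero,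
    zero_add, ite_self, add_zero]
  rw [← Complex.ofReal_sum, hp]
  split_ifs <;> simp

lemma inner_psiB_ket_sub_flow {endB : E → V} {w p : E → ℝ} (hw : ∀ e, 0 < w e) {t u : V}
    (hp : ∑ e ∈ univ.filter (fun e => endB e = u), p e = if u = t then 1 else 0) :
    inner ℂ (psiB endB w t u) (ket (Sum.inr true) - edgeVector (fun e => p e / √(w e))) = 0 := by
  have hcancel (e : E) : (√(w e) : ℂ) * (p e / √(w e)) = p e :=
    mul_div_cancel₀ _ (Complex.ofReal_ne_zero.2 (Real.sqrt_pos.2 (hw e)).ne')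
  simp only [inner_sub_right, inner_psiB, ket_apply, edgeVector_apply_inl, edgeVector_apply_inr,
    Complex.ofReal_div, hcancel, reduceCtorEq, if_false, if_true, mul_zero, sum_const_zero,
    zero_add, ite_self, add_zero]
  rw [← Complex.ofReal_sum, hp]
  split_ifs <;> simp

def transductionVector (w p : E → ℝ) : EuclideanSpace ℂ (E ⊕ Bool) :=
  (2⁻¹ : ℂ) • (edgeVector (fun e => √(w e)) - edgeVector (fun e => p e / √(w e)))

lemma transductionVector_mem_span (w p : E → ℝ) :
    transductionVector w p ∈ Submodule.span ℂ (Set.range fun e : E => ket (Sum.inl e)) :=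
  Submodule.smul_mem _ _ (Submodule.sub_mem _ (edgeVector_mem_span _) (edgeVector_mem_span _))

lemma norm_transductionVector_sq_le {w : E → ℝ} (hw : ∀ e, 0 < w e) (p : E → ℝ) :
    ‖transductionVector w p‖ ^ 2 ≤ (∑ e, w e + ∑ e, p e ^ 2 / w e) / 2 := by
  have hsqrt : ∀ e, √(w e) ^ 2 = w e := fun e => Real.sq_sqrt (hw e).le
  calc ‖transductionVector w p‖ ^ 2
      ≤ (‖edgeVector (fun e => √(w e))‖ ^ 2 + ‖edgeVector (fun e => p e / √(w e))‖ ^ 2) / 2 :=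
        norm_half_smul_sub_sq_le _ _
    _ = (∑ e, w e + ∑ e, p e ^ 2 / w e) / 2 := by
        simp only [norm_edgeVector_sq, div_pow, hsqrt]

lemma reflectionB_reflectionA_transductionVector {A B : Finset V} {endA endB : E → V}
    (hA : ∀ e, endA e ∈ A) (hB : ∀ e, endB e ∈ B) {w : E → ℝ} (hw : ∀ e, 0 < w e)
    {s t : V} (hs : s ∈ A) (ht : t ∈ B) {p : E → ℝ}
    (hpA : ∀ u ∈ A, ∑ e ∈ univ.filter (fun e => endA e = u), p e = if u = s then 1 else 0)
    (hpB : ∀ u ∈ B, ∑ e ∈ univ.filter (fun e => endB e = u), p e = if u = t then 1 else 0)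
    {RA RB : EuclideanSpace ℂ (E ⊕ Bool) →ₗ[ℂ] EuclideanSpace ℂ (E ⊕ Bool)}
    (hRAneg : ∀ u ∈ A, RA (psiA endA w s u) = -psiA endA w s u)
    (hRAid : ∀ x, (∀ u ∈ A, inner ℂ (psiA endA w s u) x = 0) → RA x = x)
    (hRBneg : ∀ u ∈ B, RB (psiB endB w t u) = -psiB endB w t u)
    (hRBid : ∀ x, (∀ u ∈ B, inner ℂ (psiB endB w t u) x = 0) → RB x = x) :
    RB (RA (ket (Sum.inr false) + transductionVector w p))
      = ket (Sum.inr true) + transductionVector w p := by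
  set φ := edgeVector fun e => p e / √(w e)
  have hzA : ∀ u ∈ A, inner ℂ (psiA endA w s u) ((2⁻¹ : ℂ) • (ket (Sum.inr false) - φ)) = 0 :=
    fun u hu => by rw [inner_smul_right, inner_psiA_ket_sub_flow hw (hpA u hu), mul_zero]
  have hzB : ∀ u ∈ B, inner ℂ (psiB endB w t u) ((2⁻¹ : ℂ) • (ket (Sum.inr true) - φ)) = 0 :=
    fun u hu => by rw [inner_smul_right, inner_psiB_ket_sub_flow hw (hpB u hu), mul_zero]
  calc RB (RA (ket (Sum.inr false) + transductionVector w p))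
      = RB (RA ((2⁻¹ : ℂ) • ∑ u ∈ A, psiA endA w s u
          + (2⁻¹ : ℂ) • (ket (Sum.inr false) - φ))) := by
        rw [sum_psiA hA w hs, transductionVector]; congr 2; module
    _ = RB ((-2⁻¹ : ℂ) • ∑ u ∈ B, psiB endB w t u + (2⁻¹ : ℂ) • (ket (Sum.inr true) - φ)) := by
        rw [reflection_apply_smul_sum_add hRAneg hRAid _ hzA, sum_psiA hA w hs,
          sum_psiB hB w ht]
        congr 1; module
    _ = ket (Sum.inr true) + transductionVector w p := by
        rw [reflection_apply_smul_sum_add hRBneg hRBid _ hzB, sum_psiB hB w ht,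
          transductionVector]
        module

end

variable {V E : Type*} [Fintype V] [Fintype E] [DecidableEq V] [DecidableEq E]

theorem electric_walk_transduction_reweighted
    (A B : Finset V)
    (endA endB : E → V) (hA : ∀ e, endA e ∈ A) (hB : ∀ e, endB e ∈ B)
    (w : E → ℝ) (hw : ∀ e, 0 < w e)
    (s t : V) (hs : s ∈ A) (ht : t ∈ B)
    (p : E → ℝ)
    (hpA : ∀ u ∈ A, ∑ e ∈ Finset.univ.filter (fun e => endA e = u), p e
        = if u = s then 1 else 0)
    (hpB : ∀ u ∈ B, ∑ e ∈ Finset.univ.filter (fun e => endB e = u), p e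
        = if u = t then 1 else 0)
    (W R : ℝ) (hW : W = ∑ e : E, w e) (hR : R = ∑ e : E, (p e) ^ 2 / w e)
    (hWpos : 0 < W) (hRpos : 0 < R)
    (α : ℝ) (hα : α = Real.sqrt (R / W))
    (RA RB : EuclideanSpace ℂ (E ⊕ Bool) →ₗ[ℂ] EuclideanSpace ℂ (E ⊕ Bool))
    (hRAneg : ∀ u ∈ A, RA (psiA endA (fun e => α * w e) s u) = -psiA endA (fun e => α * w e) s u)
    (hRAid : ∀ x, (∀ u ∈ A, (inner ℂ (psiA endA (fun e => α * w e) s u) x : ℂ) = 0) → RA x = x)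
    (hRBneg : ∀ u ∈ B, RB (psiB endB (fun e => α * w e) t u) = -psiB endB (fun e => α * w e) t u)
    (hRBid : ∀ x, (∀ u ∈ B, (inner ℂ (psiB endB (fun e => α * w e) t u) x : ℂ) = 0) → RB x = x) :
    ∃ v ∈ Submodule.span ℂ
        (Set.range (fun e : E => ket (Sum.inl e) : E → EuclideanSpace ℂ (E ⊕ Bool))),
      RB (RA (ket (Sum.inr false) + v)) = ket (Sum.inr true) + v ∧
      ‖v‖ ^ 2 ≤ Real.sqrt (W * R) := by
  have hα_pos : 0 < α := hα ▸ Real.sqrt_pos.2 (div_pos hRpos hWpos)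
  have hw' (e : E) : 0 < α * w e := mul_pos hα_pos (hw e)
  refine ⟨transductionVector (fun e => α * w e) p, transductionVector_mem_span _ _,
    reflectionB_reflectionA_transductionVector hA hB hw' hs ht hpA hpB hRAneg hRAid hRBneg hRBid,
    ?_⟩
  calc ‖transductionVector (fun e => α * w e) p‖ ^ 2
      ≤ (∑ e, α * w e + ∑ e, p e ^ 2 / (α * w e)) / 2 := norm_transductionVector_sq_le hw' p
    _ = (α * W + R / α) / 2 := by
        rw [hW, hR, mul_sum, sum_div]
        simp only [div_mul_eq_div_div_swap]
    _ = √(W * R) := by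
        rw [hα, Real.sqrt_div_mul_self R hWpos, Real.div_sqrt_div hWpos hRpos]
        ring

end Stmt7
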